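/- arXiv:1711.01313 — 4 statements merged into one kernel-verified Lean document; each statement's English description precedes it below -/
import Mathlib

section
/- For Λ > 0, m > 0, a ≠ 0, the polynomial Δ(r) = -(Λ/3)r²(r²+a²) + r² - 2mr + a² has exactly one negative real root (counted without multiplicity), i.e., there is a unique r₁ < 0 with Δ(r₁) = 0. -/
/-- Uniqueness helper: two negative roots of Δ must coincide. -/
lemma neg_root_unique (Λ m a : ℝ) (hΛ : 0 < Λ) (hm : 0 < m)
    (r₁ r₂ : ℝ) (h1 : r₁ < 0) (h2 : r₂ < 0)
    (e1 : -(Λ/3) * r₁^2 * (r₁^2 + a^2) + r₁^2 - 2*m*r₁ + a^2 = 0)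
    (e2 : -(Λ/3) * r₂^2 * (r₂^2 + a^2) + r₂^2 - 2*m*r₂ + a^2 = 0) :
    r₁ = r₂ := by
  by_contra hne
  rcases lt_or_gt_of_ne hne with h | h
  · have hsub : r₂ - r₁ > 0 := by linarith
    have hprod : 0 < r₁ * r₂ := mul_pos_of_neg_of_neg h1 h2
    have hsum : r₁ + r₂ < 0 := by linarith
    have hsq : 0 < r₁^2 * r₂^2 := mul_pos (by nlinarith) (by nlinarith)
    nlinarith [mul_pos hsub (mul_pos hsq hΛ), mul_pos hsub hprod,
      mul_pos (mul_pos hsub hsq) (mul_pos hΛ (neg_pos.mpr hsum)),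
      mul_pos (mul_pos hsub hprod) hm, sq_nonneg a,
      mul_pos hsub (mul_pos hprod hm),
      mul_pos hsub (neg_pos.mpr hsum)]
  · have hsub : r₁ - r₂ > 0 := by linarith
    have hprod : 0 < r₁ * r₂ := mul_pos_of_neg_of_neg h1 h2
    have hsum : r₁ + r₂ < 0 := by linarith
    have hsq : 0 < r₁^2 * r₂^2 := mul_pos (by nlinarith) (by nlinarith)
    nlinarith [mul_pos hsub (mul_pos hsq hΛ), mul_pos hsub hprod,
      mul_pos (mul_pos hsub hsq) (mul_pos hΛ (neg_pos.mpr hsum)),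
      mul_pos (mul_pos hsub hprod) hm, sq_nonneg a,
      mul_pos hsub (mul_pos hprod hm),
      mul_pos hsub (neg_pos.mpr hsum)]

/-- For Λ > 0, m > 0, a ≠ 0, the polynomial Δ(r) = -(Λ/3)r²(r²+a²) + r² - 2mr + a²
has exactly one negative real root: there is a unique r₁ < 0 with Δ(r₁) = 0. -/
theorem stmt_1 (Λ m a : ℝ) (hΛ : 0 < Λ) (hm : 0 < m) (ha : a ≠ 0)
    (Δ : ℝ → ℝ)
    (hΔ : ∀ r : ℝ, Δ r = -(Λ/3) * r^2 * (r^2 + a^2) + r^2 - 2*m*r + a^2) :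
    ∃! r : ℝ, r < 0 ∧ Δ r = 0 := by
  have ha2 : 0 < a^2 := by positivity
  -- choose large c
  set c : ℝ := max 1 (3*(1 + 2*m + a^2)/Λ) with hc
  have hc1 : (1:ℝ) ≤ c := le_max_left _ _
  have hc2 : 3*(1 + 2*m + a^2)/Λ ≤ c := le_max_right _ _
  have hΛc : 3*(1 + 2*m + a^2) ≤ Λ * c := by
    rw [div_le_iff₀ hΛ] at hc2; linarith
  have hcpos : 0 < c := by linarith
  have hcneg : -c < 0 := by linarith
  have hΔc : Δ (-c) ≤ 0 := by
    rw [hΔ]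
    have hcc : c ≤ c^2 := by nlinarith
    have hcc2 : c^2 ≤ c^3 := by nlinarith [mul_nonneg (sq_nonneg c) (by linarith : (0:ℝ) ≤ c - 1)]
    have s1 : c^2 + 2*m*c + a^2 ≤ (1+2*m+a^2)*c^2 := by nlinarith
    have s2 : (1+2*m+a^2)*c^2 ≤ (1+2*m+a^2)*c^3 := by nlinarith
    have s3 : (1+2*m+a^2)*c^3 ≤ (Λ/3)*c^4 := by
      nlinarith [mul_le_mul_of_nonneg_right hΛc (by positivity : (0:ℝ) ≤ c^3)]
    nlinarith [mul_nonneg (mul_nonneg (le_of_lt hΛ) (sq_nonneg c)) (sq_nonneg a)]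
  have hΔ0 : Δ 0 = a^2 := by rw [hΔ]; ring
  have hcont : ContinuousOn Δ (Set.Icc (-c) 0) := by
    have : Δ = fun r => -(Λ/3) * r^2 * (r^2 + a^2) + r^2 - 2*m*r + a^2 := funext hΔ
    rw [this]; fun_prop
  have hivt := intermediate_value_Icc (le_of_lt hcneg) hcont
  have h0mem : (0:ℝ) ∈ Set.Icc (Δ (-c)) (Δ 0) := by
    constructor
    · exact hΔc
    · rw [hΔ0]; positivity
  obtain ⟨r, hrmem, hr0⟩ := hivt h0mem
  have hrneg : r < 0 := by
    rcases lt_or_eq_of_le hrmem.2 with h | h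
    · exact h
    · exfalso; rw [h] at hr0; rw [hΔ0] at hr0; nlinarith
  refine ⟨r, ⟨hrneg, hr0⟩, ?_⟩
  rintro y ⟨hy, hy0⟩
  have := neg_root_unique Λ m a hΛ hm y r hy hrneg
    (by rw [← hΔ]; exact hy0) (by rw [← hΔ]; exact hr0)
  exact this
end

section
/- If r > 0, m ≥ 0, Λ ≥ 0, a ∈ ℝ, and (r,θ) is not on the ring (i.e., r² + a²cos²θ > 0), then Δ̂(θ)(r²+a²)² − Δ(r)a²sin²θ > 0. -/
/-- If r > 0, m ≥ 0, Λ ≥ 0 and (r,θ) is not on the ring (r² + a²cos²θ > 0),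
then Δ̂(θ)(r²+a²)² − Δ(r)a²sin²θ > 0. -/
theorem stmt_5 (Λ m a r θ : ℝ) (hr : 0 < r) (hm : 0 ≤ m) (hΛ : 0 ≤ Λ)
    (hring : 0 < r^2 + a^2 * (Real.cos θ)^2) :
    0 < (1 + (Λ/3) * a^2 * (Real.cos θ)^2) * (r^2 + a^2)^2
        - (-(Λ/3) * r^2 * (r^2 + a^2) + r^2 - 2*m*r + a^2) * a^2 * (Real.sin θ)^2 := by
  have hs : (Real.sin θ)^2 = 1 - (Real.cos θ)^2 := by
    have := Real.sin_sq_add_cos_sq θ; linarith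
  have key : (1 + (Λ/3) * a^2 * (Real.cos θ)^2) * (r^2 + a^2)^2
        - (-(Λ/3) * r^2 * (r^2 + a^2) + r^2 - 2*m*r + a^2) * a^2 * (Real.sin θ)^2
      = (r^2 + a^2) * (r^2 + a^2 * (Real.cos θ)^2)
        + 2*m*r*a^2*(Real.sin θ)^2
        + (Λ*a^2/3) * (r^2 + a^2) * ((r^2 + a^2) * (Real.cos θ)^2 + r^2 * (Real.sin θ)^2) := by
    rw [hs]; ring
  rw [key]
  have h1 : 0 < (r^2 + a^2) * (r^2 + a^2 * (Real.cos θ)^2) := by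
    apply mul_pos _ hring
    nlinarith [sq_nonneg a, sq_nonneg (Real.cos θ), sq_nonneg (a * Real.cos θ)]
  have h2 : 0 ≤ 2*m*r*a^2*(Real.sin θ)^2 := by positivity
  have h3 : 0 ≤ (Λ*a^2/3) * (r^2 + a^2) * ((r^2 + a^2) * (Real.cos θ)^2 + r^2 * (Real.sin θ)^2) := by
    positivity
  linarith
end

section
/- On any Carter block with Δ(r) > 0 not containing the ring singularity (so r > 0 throughout), the gradient of t is timelike: g^{tt} = −I²[Δ̂(θ)(r²+a²)² − Δ(r)a²sin²θ]/(ρ²Δ̂(θ)Δ(r)) < 0 for all (r,θ) with r > 0, Δ(r) > 0, ρ² > 0. -/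
/-- On any Carter block with Δ(r) > 0 not containing the ring singularity (r > 0),
the gradient of t is timelike:
g^{tt} = −I²[Δ̂(θ)(r²+a²)² − Δ(r)a²sin²θ]/(ρ²Δ̂(θ)Δ(r)) < 0. -/
theorem stmt_12 (Λ m a r θ : ℝ) (hΛ : 0 < Λ) (hm : 0 < m) (ha : a ≠ 0)
    (Δ Δhat : ℝ → ℝ) (I ρ2 : ℝ)
    (hΔ : ∀ s : ℝ, Δ s = -(Λ/3) * s^2 * (s^2 + a^2) + s^2 - 2*m*s + a^2)
    (hΔhat : ∀ ϑ : ℝ, Δhat ϑ = 1 + (Λ/3) * a^2 * (Real.cos ϑ)^2)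
    (hI : I = 1 + (Λ/3) * a^2)
    (hρ2 : ρ2 = r^2 + a^2 * (Real.cos θ)^2)
    (hr : 0 < r) (hΔr : 0 < Δ r) (hρ : 0 < ρ2) :
    -(I^2 * (Δhat θ * (r^2 + a^2)^2 - Δ r * a^2 * (Real.sin θ)^2))
      / (ρ2 * Δhat θ * Δ r) < 0 := by
  have hs : Real.sin θ ^ 2 = 1 - Real.cos θ ^ 2 := by
    have := Real.sin_sq_add_cos_sq θ; linarith
  set c := Real.cos θ with hc
  have hc2 : 0 ≤ c^2 := sq_nonneg c
  have ha2 : 0 < a^2 := by positivity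
  have hΔh : 0 < Δhat θ := by rw [hΔhat]; positivity
  have hIpos : 0 < I := by rw [hI]; nlinarith
  have hN : 0 < Δhat θ * (r^2 + a^2)^2 - Δ r * a^2 * (Real.sin θ)^2 := by
    rw [hΔhat, hΔ, hs, ← hc]
    have h1 : 1 - c^2 ≥ 0 := by nlinarith [sq_nonneg (Real.sin θ)]
    have key : (1 + Λ/3*a^2*c^2)*(r^2+a^2)^2 -
        (-(Λ/3)*r^2*(r^2+a^2) + r^2 - 2*m*r + a^2)*a^2*(1-c^2)
        = (r^2+a^2)*(r^2+a^2*c^2) + 2*m*r*a^2*(1-c^2)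
          + (Λ*a^2/3)*(r^2+a^2)*((r^2+a^2)*c^2 + r^2*(1-c^2)) := by ring
    have t1 : 0 < (r^2+a^2)*(r^2+a^2*c^2) := by
      apply mul_pos (by positivity); rw [← hρ2]; exact hρ
    have t2 : 0 ≤ 2*m*r*a^2*(1-c^2) := by positivity
    have t3 : 0 ≤ (Λ*a^2/3)*(r^2+a^2)*((r^2+a^2)*c^2 + r^2*(1-c^2)) := by positivity
    nlinarith [key]
  have hD : 0 < ρ2 * Δhat θ * Δ r := by positivity
  have := div_pos (mul_pos (pow_pos hIpos 2) hN) hD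
  rw [neg_div]
  linarith
end

section
/- On the equatorial plane of the Carter time machine, the curve δ_ε with tangent ε∂_t − b∂_φ satisfies g(δ'_ε, V) = −Δ(r)(ε + ab)/I²; in particular, if Δ(r) > 0, ε = ±1, and b > 1/a (with a > 0), then g(δ'_ε, V) < 0 for both ε = +1 and ε = −1. -/
/-- On the equatorial plane, the curve δ_ε with tangent ε∂_t − b∂_φ satisfies
g(δ'_ε, V) = −Δ(r)(ε + ab)/I²; in particular if Δ(r) > 0, a > 0, b > 1/a and
ε = ±1, then g(δ'_ε, V) < 0. -/
theorem stmt_15 (Λ m a b I r : ℝ) (hI : I = 1 + (Λ/3) * a^2) (hI0 : I ≠ 0)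
    (hr : r ≠ 0)
    (Δ : ℝ → ℝ)
    (hΔ : ∀ s : ℝ, Δ s = -(Λ/3) * s^2 * (s^2 + a^2) + s^2 - 2*m*s + a^2)
    (gtt gtφ gφφ : ℝ)
    (hgtt : gtt = -(Δ r - a^2) / (I^2 * r^2))
    (hgtφ : gtφ = (Δ r - (r^2 + a^2)) * a / (I^2 * r^2))
    (hgφφ : gφφ = ((r^2 + a^2)^2 - Δ r * a^2) / (I^2 * r^2)) :
    (∀ ε : ℝ, ε * ((r^2 + a^2) * gtt + a * gtφ)
        - b * ((r^2 + a^2) * gtφ + a * gφφ) = -(Δ r) * (ε + a * b) / I^2) ∧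
    (0 < Δ r → 0 < a → 1 / a < b →
      ∀ ε : ℝ, ε = 1 ∨ ε = -1 →
        ε * ((r^2 + a^2) * gtt + a * gtφ)
          - b * ((r^2 + a^2) * gtφ + a * gφφ) < 0) := by
  have hr2 : (r:ℝ)^2 ≠ 0 := pow_ne_zero 2 hr
  have hI2 : (I:ℝ)^2 ≠ 0 := pow_ne_zero 2 hI0
  have key : ∀ ε : ℝ, ε * ((r^2 + a^2) * gtt + a * gtφ)
      - b * ((r^2 + a^2) * gtφ + a * gφφ) = -(Δ r) * (ε + a * b) / I^2 := by
    intro ε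
    subst hgtt hgtφ hgφφ
    field_simp
    ring
  refine ⟨key, ?_⟩
  intro hΔpos ha hb ε hε
  rw [key ε]
  have hab : 1 < a * b := by
    have := (div_lt_iff₀ ha).mp hb
    linarith [mul_comm b a]
  have hpos : 0 < ε + a * b := by
    rcases hε with h | h <;> simp [h] <;> linarith
  have : 0 < Δ r * (ε + a * b) := mul_pos hΔpos hpos
  have hI2pos : 0 < I^2 := lt_of_le_of_ne (sq_nonneg I) (Ne.symm hI2)
  have h2 := div_pos this hI2pos
  rw [neg_mul, neg_div]
  linarith
end
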